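/- Let n ≥ m ≥ 1 and d = n + 1 - ⌊(n+1)/(m+1)⌋ - ⌈(n+1)/(m+1)⌉. Then for all 0 ≤ k ≤ d, ∑_{j=0}^{k} (-1)^{k-j} · binom(d-j, k-j) · C(n-j+1, m; j) ≥ 0, where C(N, m; j) is the coefficient of x^j in (1+x+⋯+x^{m-1})^N. -/

import Mathlib

/-- Coefficient of `x^j` in `(1 + x + ⋯ + x^(m-1))^N`, zero if `N < 0` or `j < 0`. -/
noncomputable def eulerCoeff (N : ℤ) (m : ℕ) (j : ℤ) : ℤ :=
  if 0 ≤ N ∧ 0 ≤ j then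
    (((∑ i ∈ Finset.range m, (Polynomial.X : Polynomial ℤ) ^ i)) ^ N.toNat).coeff j.toNat
  else 0

/-!
Put `y = X / (1 - X)` and let `G t = ∑ⱼ C(t - j, m; j) yʲ`, the sum over the compositions of `t`
into parts of size at most `m` of `y ^ (t - #parts)`. The alternating sum is the coefficient of
`Xᵏ` in `(1 - X)ᵈ G (n + 1)`, so it suffices that `(1 - X) ^ D t * G t` has nonnegative
coefficients, where `D t = t - ⌊t / (m + 1)⌋ - ⌈t / (m + 1)⌉`.

Cutting the compositions of `P + Q` after `P` gives
`G (P + Q) = G P * G Q + ∑ y ^ (a + b + 1) * G (P - 1 - a) * G (Q - 1 - b)`, the sum running over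
the parts that straddle the cut. For `P` a positive multiple of `m + 1` and `1 ≤ Q ≤ m + 1`,
`D (P + Q) = D P + D Q`, and in the other terms the factor `y ^ (a + b + 1)` makes up for the
depth lost, so induction on `t` reduces everything to `G t = (1 - X) ^ (1 - t)` for `1 ≤ t ≤ m`
and to `G (m + 1)`.
-/

open Finset PowerSeries

namespace PowerSeries

section Semiring

variable (R : Type*) [Semiring R] [PartialOrder R] [IsOrderedRing R]

def nonnegCoeffs : Subsemiring R⟦X⟧ where
  carrier := {f | ∀ n, 0 ≤ coeff n f}
  mul_mem' {f g} hf hg n := by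
    rw [coeff_mul]
    exact sum_nonneg fun p _ => mul_nonneg (hf p.1) (hg p.2)
  one_mem' n := by
    rw [coeff_one]
    split_ifs <;> simp
  add_mem' hf hg n := by
    rw [map_add]
    exact add_nonneg (hf n) (hg n)
  zero_mem' n := by simp

variable {R}

lemma mem_nonnegCoeffs {f : R⟦X⟧} : f ∈ nonnegCoeffs R ↔ ∀ n, 0 ≤ coeff n f := Iff.rfl

lemma X_mem_nonnegCoeffs : X ∈ nonnegCoeffs R := mem_nonnegCoeffs.2 fun n => by
  rw [coeff_X]
  split_ifs <;> simp

lemma mk_one_mem_nonnegCoeffs : mk 1 ∈ nonnegCoeffs R := mem_nonnegCoeffs.2 fun n => by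
  rw [coeff_mk]
  exact zero_le_one

end Semiring

section CommRing

variable {R : Type*} [CommRing R]

lemma one_add_X_mul_mk_one : (1 : R⟦X⟧) + X * mk 1 = mk 1 := by
  linear_combination -(mk_one_mul_one_sub_eq_one R)

lemma one_sub_X_pow_mul_mk_one_pow {d j : ℕ} (h : j ≤ d) :
    ((1 : R⟦X⟧) - X) ^ d * mk 1 ^ j = (1 - X) ^ (d - j) := by
  obtain ⟨e, rfl⟩ := Nat.exists_eq_add_of_le h
  rw [Nat.add_sub_cancel_left, add_comm, pow_add, mul_assoc, ← mul_pow, mul_comm (1 - X),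
    mk_one_mul_one_sub_eq_one, one_pow, mul_one]

lemma coeff_one_sub_X_pow (e t : ℕ) :
    coeff t (((1 : R⟦X⟧) - X) ^ e) = (-1 : R) ^ t * e.choose t := by
  have h : ((1 : R⟦X⟧) - X) ^ e =
      rescale (-1) (((1 + Polynomial.X) ^ e : Polynomial R) : R⟦X⟧) := by
    simp [rescale_X, sub_eq_add_neg]
  rw [h, coeff_rescale, Polynomial.coeff_coe, Polynomial.coeff_one_add_X_pow]

variable [PartialOrder R] [IsOrderedRing R]

def HasNonnegNumerator (a : ℕ) (f : R⟦X⟧) : Prop := (1 - X) ^ a * f ∈ nonnegCoeffs R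

variable {a b c : ℕ} {f g : R⟦X⟧}

lemma HasNonnegNumerator.mono (hf : HasNonnegNumerator a f) (hca : c ≤ a) :
    HasNonnegNumerator c f := by
  have h : (1 - X) ^ c * f = mk 1 ^ (a - c) * ((1 - X) ^ a * f) := by
    rw [← mul_assoc, mul_comm (_ ^ (a - c)), one_sub_X_pow_mul_mk_one_pow (Nat.sub_le a c),
      Nat.sub_sub_self hca]
  rw [HasNonnegNumerator, h]
  exact mul_mem (pow_mem mk_one_mem_nonnegCoeffs _) hf

lemma HasNonnegNumerator.mul (hf : HasNonnegNumerator a f) (hg : HasNonnegNumerator b g) :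
    HasNonnegNumerator (a + b) (f * g) := by
  rw [HasNonnegNumerator, show (1 - X) ^ (a + b) * (f * g) = ((1 - X) ^ a * f) * ((1 - X) ^ b * g)
    by ring]
  exact mul_mem hf hg

lemma HasNonnegNumerator.add (hf : HasNonnegNumerator a f) (hg : HasNonnegNumerator a g) :
    HasNonnegNumerator a (f + g) := by
  rw [HasNonnegNumerator, mul_add]
  exact add_mem hf hg

lemma HasNonnegNumerator.sum {ι : Type*} {s : Finset ι} {f : ι → R⟦X⟧}
    (h : ∀ i ∈ s, HasNonnegNumerator a (f i)) : HasNonnegNumerator a (∑ i ∈ s, f i) := by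
  rw [HasNonnegNumerator, mul_sum]
  exact sum_mem h

lemma hasNonnegNumerator_zero : HasNonnegNumerator a (0 : R⟦X⟧) := by
  rw [HasNonnegNumerator, mul_zero]
  exact zero_mem _

lemma hasNonnegNumerator_mk_one_pow (a : ℕ) : HasNonnegNumerator a (mk 1 ^ a : R⟦X⟧) := by
  rw [HasNonnegNumerator, one_sub_X_pow_mul_mk_one_pow le_rfl, Nat.sub_self, pow_zero]
  exact one_mem _

lemma hasNonnegNumerator_X_mul_mk_one_pow (a : ℕ) :
    HasNonnegNumerator a ((X * mk 1) ^ a : R⟦X⟧) := by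
  rw [HasNonnegNumerator, mul_pow, mul_left_comm, one_sub_X_pow_mul_mk_one_pow le_rfl,
    Nat.sub_self, pow_zero, mul_one]
  exact pow_mem X_mem_nonnegCoeffs _

end CommRing

end PowerSeries

section Compositions

variable {S : Type*} [CommRing S] (m : ℕ) (y : S)

/-- The sum, over the compositions of `t` into parts of size at most `m`, of `y ^ (t - #parts)`;
it is `0` for `t < 0`. -/
noncomputable def compositionSum (t : ℤ) : S :=
  if t < 0 then 0 else if t = 0 then 1 else ∑ i ∈ range m, y ^ i * compositionSum (t - 1 - i)
termination_by t.toNat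
decreasing_by omega

lemma compositionSum_neg {t : ℤ} (ht : t < 0) : compositionSum m y t = 0 := by
  rw [compositionSum, if_pos ht]

lemma compositionSum_zero : compositionSum m y 0 = 1 := by
  rw [compositionSum, if_neg (lt_irrefl 0), if_pos rfl]

lemma compositionSum_of_pos {t : ℤ} (ht : 0 < t) :
    compositionSum m y t = ∑ i ∈ range m, y ^ i * compositionSum m y (t - 1 - i) := by
  rw [compositionSum, if_neg (by omega), if_neg (by omega)]

lemma sum_pow_mul_compositionSum (s : ℤ) :
    ∑ i ∈ range m, y ^ i * compositionSum m y (s - 1 - i) =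
      compositionSum m y s - if s = 0 then 1 else 0 := by
  rcases lt_trichotomy s 0 with hs | rfl | hs
  · rw [compositionSum_neg m y hs, if_neg hs.ne, sub_zero]
    exact sum_eq_zero fun i _ => by rw [compositionSum_neg m y (by omega), mul_zero]
  · rw [compositionSum_zero, if_pos rfl, sub_self]
    exact sum_eq_zero fun i _ => by rw [compositionSum_neg m y (by omega), mul_zero]
  · rw [if_neg hs.ne', sub_zero, compositionSum_of_pos m y hs]

lemma compositionSum_natCast_add_one {s : ℕ} (hs : s < m) :
    compositionSum m y (s + 1) = (1 + y) ^ s := by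
  induction s using Nat.strong_induction_on with
  | _ s ih =>
  have htail : ∑ i ∈ Ico (s + 1) m, y ^ i * compositionSum m y (s + 1 - 1 - i) = 0 :=
    sum_eq_zero fun i hi => by
      rw [compositionSum_neg m y (by simp only [mem_Ico] at hi; omega), mul_zero]
  have hhead : ∀ i ∈ range s,
      y ^ i * compositionSum m y (s + 1 - 1 - i) = y ^ i * (1 + y) ^ (s - 1 - i) := by
    intro i hi
    rw [mem_range] at hi
    rw [show (s : ℤ) + 1 - 1 - i = ((s - 1 - i : ℕ) : ℤ) + 1 by omega, ih _ (by omega) (by omega)]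
  rw [compositionSum_of_pos m y (by omega), ← sum_range_add_sum_Ico _ hs, htail, add_zero,
    sum_range_succ, sum_congr rfl hhead, show (s : ℤ) + 1 - 1 - s = 0 by ring,
    compositionSum_zero, mul_one, geom_sum₂_comm]
  simpa using geom_sum₂_mul_add 1 y s

/-- The part of `compositionSum m y (P + s)` coming from the compositions with a part covering
`P - a, …, P + b + 1`, i.e. straddling the cut between `P` and `P + 1`. -/
noncomputable def straddleSum (P s : ℤ) : S :=
  ∑ a ∈ range (m - 1), ∑ b ∈ range (m - 1 - a),
    y ^ (a + b + 1) * (compositionSum m y (P - 1 - a) * compositionSum m y (s - 1 - b))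

lemma straddleSum_of_nonpos (P : ℤ) {s : ℤ} (hs : s ≤ 0) : straddleSum m y P s = 0 :=
  sum_eq_zero fun a _ => sum_eq_zero fun b _ => by
    rw [compositionSum_neg m y (show s - 1 - b < 0 by omega), mul_zero, mul_zero]

lemma sum_pow_mul_straddleSum (P : ℤ) {Q : ℕ} (hQ : 1 ≤ Q) :
    ∑ i ∈ range m, y ^ i * straddleSum m y P (Q - 1 - i) =
      straddleSum m y P Q - ∑ a ∈ range (m - Q), y ^ (a + Q) * compositionSum m y (P - 1 - a) := by
  have hlast : ∀ a ∈ range (m - 1), ∑ b ∈ range (m - 1 - a),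
      (if (Q : ℤ) - 1 - b = 0 then y ^ (a + b + 1) * compositionSum m y (P - 1 - a) else 0) =
      if a < m - Q then y ^ (a + Q) * compositionSum m y (P - 1 - a) else 0 := by
    intro a _
    simp only [show ∀ b : ℕ, (Q : ℤ) - 1 - b = 0 ↔ b = Q - 1 from fun b => by omega]
    rw [sum_ite_eq', show a + (Q - 1) + 1 = a + Q by omega]
    exact if_congr (by rw [mem_range]; omega) rfl rfl
  calc ∑ i ∈ range m, y ^ i * straddleSum m y P (Q - 1 - i)
      = ∑ a ∈ range (m - 1), ∑ b ∈ range (m - 1 - a), y ^ (a + b + 1) *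
          (compositionSum m y (P - 1 - a) *
            ∑ i ∈ range m, y ^ i * compositionSum m y (Q - 1 - b - 1 - i)) := by
        simp only [straddleSum, mul_sum]
        rw [sum_comm]
        refine sum_congr rfl fun a _ => ?_
        rw [sum_comm]
        refine sum_congr rfl fun b _ => sum_congr rfl fun i _ => ?_
        rw [show (Q : ℤ) - 1 - i - 1 - b = Q - 1 - b - 1 - i by ring]
        ring
    _ = straddleSum m y P Q - ∑ a ∈ range (m - 1), ∑ b ∈ range (m - 1 - a),
          (if (Q : ℤ) - 1 - b = 0 then y ^ (a + b + 1) * compositionSum m y (P - 1 - a)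
            else 0) := by
        simp only [sum_pow_mul_compositionSum, straddleSum, ← sum_sub_distrib]
        refine sum_congr rfl fun a _ => sum_congr rfl fun b _ => ?_
        split_ifs <;> ring
    _ = _ := by
        rw [sum_congr rfl hlast, ← sum_filter,
          show (range (m - 1)).filter (· < m - Q) = range (m - Q) by ext; simp; omega]

theorem compositionSum_add (P Q : ℕ) :
    compositionSum m y ((P : ℤ) + Q) =
      compositionSum m y P * compositionSum m y Q + straddleSum m y P Q := by
  induction Q using Nat.strong_induction_on with
  | _ Q ih =>
  rcases Nat.eq_zero_or_pos Q with rfl | hQ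
  · simp [compositionSum_zero, straddleSum_of_nonpos]
  -- Split off the last part, of size `i + 1`: it lies in the last `Q` places or straddles the cut.
  have hterm : ∀ i ∈ range m, y ^ i * compositionSum m y (P + Q - 1 - i) =
      (compositionSum m y P * (y ^ i * compositionSum m y (Q - 1 - i)) +
        y ^ i * straddleSum m y P (Q - 1 - i)) +
      if Q ≤ i then y ^ i * compositionSum m y (P + Q - 1 - i) else 0 := by
    intro i _
    split_ifs with hi
    · rw [compositionSum_neg m y (show (Q : ℤ) - 1 - i < 0 by omega),
        straddleSum_of_nonpos m y _ (by omega)]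
      ring
    · obtain ⟨s, hs⟩ : ∃ s : ℕ, (Q : ℤ) - 1 - i = s := ⟨Q - 1 - i, by omega⟩
      rw [show (P : ℤ) + Q - 1 - i = P + s by omega, hs, ih s (by omega)]
      ring
  have hboundary : ∑ i ∈ range m, (if Q ≤ i then y ^ i * compositionSum m y (P + Q - 1 - i) else 0)
      = ∑ a ∈ range (m - Q), y ^ (a + Q) * compositionSum m y (P - 1 - a) := by
    rw [← sum_filter, show (range m).filter (Q ≤ ·) = Ico Q m by ext; simp; omega,
      sum_Ico_eq_sum_range]
    refine sum_congr rfl fun a _ => ?_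
    rw [add_comm Q a]
    congr 2
    push_cast
    ring
  rw [compositionSum_of_pos m y (by omega), sum_congr rfl hterm, sum_add_distrib, sum_add_distrib,
    ← mul_sum, sum_pow_mul_compositionSum, if_neg (by omega), sub_zero,
    sum_pow_mul_straddleSum m y _ hQ, hboundary]
  ring

end Compositions

section EulerCoeff

variable (m : ℕ)

lemma eulerCoeff_natCast (N j : ℕ) :
    eulerCoeff N m j = ((∑ i ∈ range m, (Polynomial.X : Polynomial ℤ) ^ i) ^ N).coeff j := by
  simp [eulerCoeff]

lemma eulerCoeff_of_neg (N : ℤ) {j : ℤ} (hj : j < 0) : eulerCoeff N m j = 0 := by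
  rw [eulerCoeff, if_neg (by omega)]

lemma eulerCoeff_zero_left (j : ℤ) : eulerCoeff 0 m j = if j = 0 then 1 else 0 := by
  rcases lt_or_ge j 0 with hj | hj
  · rw [eulerCoeff_of_neg m _ hj, if_neg hj.ne]
  lift j to ℕ using hj
  rw [← Nat.cast_zero, eulerCoeff_natCast, pow_zero, Polynomial.coeff_one]
  simp

lemma eulerCoeff_add_one {N : ℤ} (hN : 0 ≤ N) (j : ℤ) :
    eulerCoeff (N + 1) m j = ∑ i ∈ range m, eulerCoeff N m (j - i) := by
  lift N to ℕ using hN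
  rcases lt_or_ge j 0 with hj | hj
  · rw [eulerCoeff_of_neg m _ hj]
    exact (sum_eq_zero fun i _ => eulerCoeff_of_neg m _ (by omega)).symm
  lift j to ℕ using hj
  rw [← Nat.cast_succ, eulerCoeff_natCast, pow_succ, mul_sum, Polynomial.finsetSum_coeff]
  refine sum_congr rfl fun i _ => ?_
  rw [Polynomial.coeff_mul_X_pow']
  split_ifs with hij
  · rw [show (j : ℤ) - i = ((j - i : ℕ) : ℤ) by omega, eulerCoeff_natCast]
  · rw [eulerCoeff_of_neg m _ (by omega)]

end EulerCoeff

section ClosedForm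

variable {S : Type*} [CommRing S] (m : ℕ) (y : S)

theorem compositionSum_natCast_eq_sum (q : ℕ) :
    compositionSum m y q = ∑ j ∈ range (q + 1), eulerCoeff ((q : ℤ) - j) m j • y ^ j := by
  induction q using Nat.strong_induction_on with
  | _ q ih =>
  rcases q with _ | q
  · simp [compositionSum_zero, eulerCoeff_zero_left]
  have hterm : ∀ i ∈ range m, y ^ i * compositionSum m y ((q : ℤ) - i) =
      ∑ j ∈ range (q + 1), eulerCoeff ((q : ℤ) - j) m ((j : ℤ) - i) • y ^ j := by
    intro i _
    rcases le_or_gt i q with hi | hi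
    · rw [show (q : ℤ) - i = ((q - i : ℕ) : ℤ) by omega, ih _ (by omega), mul_sum,
        ← sum_range_add_sum_Ico _ (show i ≤ q + 1 by omega),
        sum_eq_zero (s := range i) fun j hj => by
          rw [eulerCoeff_of_neg m _ (by simp only [mem_range] at hj; omega), zero_smul],
        zero_add, sum_Ico_eq_sum_range, show q + 1 - i = q - i + 1 by omega]
      refine sum_congr rfl fun j _ => ?_
      rw [mul_smul_comm, ← pow_add]
      congr 2 <;> push_cast [hi] <;> ring
    · rw [compositionSum_neg m y (by omega), mul_zero]
      exact (sum_eq_zero fun j hj => by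
        rw [eulerCoeff_of_neg m _ (by simp only [mem_range] at hj; omega), zero_smul]).symm
  rw [compositionSum_of_pos m y (by omega), sum_range_succ _ (q + 1),
    show ((q + 1 : ℕ) : ℤ) - (q + 1 : ℕ) = 0 by ring, eulerCoeff_zero_left, if_neg (by omega),
    zero_smul, add_zero]
  simp only [Nat.cast_add, Nat.cast_one, add_sub_cancel_right]
  rw [sum_congr rfl hterm, sum_comm]
  refine sum_congr rfl fun j hj => ?_
  rw [← sum_smul, show (q : ℤ) + 1 - j = (q - j) + 1 by ring,
    eulerCoeff_add_one m (by simp only [mem_range] at hj; omega)]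

theorem coeff_one_sub_X_pow_mul_compositionSum {R : Type*} [CommRing R] {d k q : ℕ}
    (hkd : k ≤ d) (hkq : k ≤ q) :
    coeff k ((1 - X) ^ d * compositionSum m (X * PowerSeries.mk 1 : R⟦X⟧) q) =
      ∑ j ∈ range (k + 1), (-1 : R) ^ (k - j) * (d - j).choose (k - j) *
        eulerCoeff ((q : ℤ) - j) m j := by
  have hterm : ∀ j ∈ range (q + 1),
      coeff k ((1 - X) ^ d *
          (eulerCoeff ((q : ℤ) - j) m j • (X * PowerSeries.mk 1 : R⟦X⟧) ^ j)) =
        if j ≤ k then (-1 : R) ^ (k - j) * (d - j).choose (k - j) * eulerCoeff ((q : ℤ) - j) m j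
        else 0 := by
    intro j _
    rw [mul_smul_comm, map_zsmul, mul_pow, mul_left_comm, coeff_X_pow_mul']
    split_ifs with hjk
    · rw [one_sub_X_pow_mul_mk_one_pow (hjk.trans hkd), coeff_one_sub_X_pow, zsmul_eq_mul]
      ring
    · exact smul_zero _
  rw [compositionSum_natCast_eq_sum, mul_sum, map_sum, sum_congr rfl hterm, ← sum_filter,
    show (range (q + 1)).filter (· ≤ k) = range (k + 1) by ext; simp; omega]

end ClosedForm

section DepthBound

variable (m : ℕ)

/-- `q - ⌊q / (m + 1)⌋ - ⌈q / (m + 1)⌉` -/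
def depthBound (q : ℕ) : ℕ := q - q / (m + 1) - (q + m) / (m + 1)

lemma depthBound_of_le {q : ℕ} (hq : q ≤ m) : depthBound m q = q - 1 := by
  rcases Nat.eq_zero_or_pos q with rfl | hq0
  · simp [depthBound]
  rw [depthBound, Nat.div_eq_of_lt (by omega : q < m + 1),
    Nat.div_eq_of_lt_le (k := 1) (by omega) (by omega)]
  omega

lemma depthBound_le_sub_one (q : ℕ) : depthBound m q ≤ q - 1 := by
  rcases Nat.eq_zero_or_pos q with rfl | hq
  · simp [depthBound]
  have : 1 ≤ (q + m) / (m + 1) := (Nat.one_le_div_iff (by omega)).2 (by omega)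
  rw [depthBound]
  generalize q / (m + 1) = A
  generalize (q + m) / (m + 1) = B at *
  omega

lemma depthBound_mul_add (c q : ℕ) :
    depthBound m ((m + 1) * c + q) = (m - 1) * c + depthBound m q := by
  obtain ⟨e, r, hr, rfl⟩ : ∃ e r, r < m + 1 ∧ q = (m + 1) * e + r :=
    ⟨q / (m + 1), q % (m + 1), Nat.mod_lt _ (by omega), (Nat.div_add_mod q (m + 1)).symm⟩
  have hfloor (e : ℕ) : ((m + 1) * e + r) / (m + 1) = e := by
    rw [Nat.mul_add_div (by omega), Nat.div_eq_of_lt hr, add_zero]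
  have hceil (e : ℕ) : ((m + 1) * e + r + m) / (m + 1) = e + if r = 0 then 0 else 1 := by
    rw [add_assoc, Nat.mul_add_div (by omega)]
    split_ifs with h
    · rw [h, zero_add, Nat.div_eq_of_lt (by omega)]
    · rw [Nat.div_eq_of_lt_le (k := 1) (by omega) (by omega)]
  rw [depthBound, depthBound, ← add_assoc, ← mul_add, hfloor, hfloor, hceil, hceil]
  rcases m with _ | m
  · omega
  · simp only [Nat.add_sub_cancel, add_mul, mul_add] at *
    split_ifs <;> omega

end DepthBound

section Positivity

variable {R : Type*} [CommRing R] [PartialOrder R] [IsOrderedRing R] (m : ℕ)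

lemma hasNonnegNumerator_compositionSum_of_le {t : ℕ} (ht : t ≤ m + 1) :
    HasNonnegNumerator (depthBound m t) (compositionSum m (X * PowerSeries.mk 1 : R⟦X⟧) t) := by
  have hsmall {s : ℕ} (hs : s < m) :
      HasNonnegNumerator s (compositionSum m (X * PowerSeries.mk 1 : R⟦X⟧) (s + 1)) := by
    rw [compositionSum_natCast_add_one m _ hs, one_add_X_mul_mk_one]
    exact hasNonnegNumerator_mk_one_pow s
  rcases Nat.lt_or_ge t (m + 1) with ht' | ht'
  · rcases Nat.eq_zero_or_pos t with rfl | ht0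
    · rw [depthBound_of_le m (Nat.zero_le m)]
      simpa [compositionSum_zero] using hasNonnegNumerator_mk_one_pow (R := R) 0
    obtain ⟨s, rfl⟩ := Nat.exists_eq_add_of_le' ht0
    rw [depthBound_of_le m (by omega), Nat.add_sub_cancel, Nat.cast_succ]
    exact hsmall (by omega)
  obtain rfl : t = m + 1 := by omega
  have hD : depthBound m (m + 1) = m - 1 := by
    simpa [depthBound_of_le m (Nat.zero_le m)] using depthBound_mul_add m 1 0
  rw [hD, compositionSum_of_pos m _ (by omega)]
  refine HasNonnegNumerator.sum fun i hi => ?_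
  rw [mem_range] at hi
  rw [show ((m + 1 : ℕ) : ℤ) - 1 - i = ((m - 1 - i : ℕ) : ℤ) + 1 by omega]
  exact ((hasNonnegNumerator_X_mul_mk_one_pow i).mul (hsmall (by omega))).mono (by omega)

lemma hasNonnegNumerator_compositionSum_add {c Q : ℕ} (hQ : 1 ≤ Q) (hQm : Q ≤ m + 1)
    (ih : ∀ s < (m + 1) * (c + 1) + Q,
      HasNonnegNumerator (depthBound m s) (compositionSum m (X * PowerSeries.mk 1 : R⟦X⟧) s)) :
    HasNonnegNumerator (depthBound m ((m + 1) * (c + 1) + Q))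
      (compositionSum m (X * PowerSeries.mk 1 : R⟦X⟧) ((m + 1) * (c + 1) + Q : ℕ)) := by
  have hDt : depthBound m ((m + 1) * (c + 1) + Q) = (m - 1) * c + (m - 1) + depthBound m Q := by
    rw [depthBound_mul_add, mul_add_one]
  have hDP : depthBound m ((m + 1) * (c + 1)) = (m - 1) * c + (m - 1) := by
    simpa [depthBound_of_le m (Nat.zero_le m), mul_add_one] using depthBound_mul_add m (c + 1) 0
  have hDQ := depthBound_le_sub_one m Q
  set P := (m + 1) * (c + 1) with hP
  have hP' : P = (m + 1) * c + m + 1 := by rw [hP]; ring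
  rw [Nat.cast_add, compositionSum_add]
  refine HasNonnegNumerator.add (((ih P (by omega)).mul (ih Q (by omega))).mono (by omega)) ?_
  refine HasNonnegNumerator.sum fun a ha => HasNonnegNumerator.sum fun b hb => ?_
  rw [mem_range] at ha hb
  rcases le_or_gt Q b with hQb | hQb
  · rw [compositionSum_neg m _ (show (Q : ℤ) - 1 - b < 0 by omega), mul_zero, mul_zero]
    exact hasNonnegNumerator_zero
  rw [show (P : ℤ) - 1 - a = ((P - 1 - a : ℕ) : ℤ) by omega,
    show (Q : ℤ) - 1 - b = ((Q - 1 - b : ℕ) : ℤ) by omega]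
  have hDa : depthBound m (P - 1 - a) = (m - 1) * c + (m - a - 1) := by
    rw [show P - 1 - a = (m + 1) * c + (m - a) by omega, depthBound_mul_add,
      depthBound_of_le m (by omega)]
  have hDb : depthBound m (Q - 1 - b) = Q - 1 - b - 1 := depthBound_of_le m (by omega)
  exact ((hasNonnegNumerator_X_mul_mk_one_pow _).mul
    ((ih _ (by omega)).mul (ih _ (by omega)))).mono (by omega)

theorem hasNonnegNumerator_compositionSum (t : ℕ) :
    HasNonnegNumerator (depthBound m t) (compositionSum m (X * PowerSeries.mk 1 : R⟦X⟧) t) := by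
  induction t using Nat.strong_induction_on with
  | _ t ih =>
  rcases le_or_gt t (m + 1) with ht | ht
  · exact hasNonnegNumerator_compositionSum_of_le m ht
  have hA : 1 ≤ (t - 1) / (m + 1) := (Nat.one_le_div_iff (by omega)).2 (by omega)
  have hdiv := Nat.div_add_mod (t - 1) (m + 1)
  have hmod := Nat.mod_lt (t - 1) (show 0 < m + 1 by omega)
  obtain ⟨c, Q, hQ, hQm, rfl⟩ : ∃ c Q, 1 ≤ Q ∧ Q ≤ m + 1 ∧ t = (m + 1) * (c + 1) + Q :=
    ⟨(t - 1) / (m + 1) - 1, (t - 1) % (m + 1) + 1, by omega, by omega,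
      by rw [Nat.sub_add_cancel hA]; omega⟩
  exact hasNonnegNumerator_compositionSum_add m hQ hQm ih

end Positivity

theorem stmt5_general (n m d k : ℕ)
    (hd : d = n + 1 - (n + 1) / (m + 1) - (n + 1 + m) / (m + 1)) (hk : k ≤ d) :
    0 ≤ ∑ j ∈ Finset.range (k + 1),
        (-1 : ℤ) ^ (k - j) * ((d - j).choose (k - j) : ℤ) * eulerCoeff ((n : ℤ) - j + 1) m j := by
  have hdn : d ≤ n + 1 := hd ▸ (Nat.sub_le _ _).trans (Nat.sub_le _ _)
  have h := hasNonnegNumerator_compositionSum (R := ℤ) m (n + 1) k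
  rw [show depthBound m (n + 1) = d from hd.symm,
    coeff_one_sub_X_pow_mul_compositionSum m hk (hk.trans hdn)] at h
  simpa [sub_add_eq_add_sub] using h

theorem stmt5 (n m d k : ℕ) (hm : 1 ≤ m) (hmn : m ≤ n)
    (hd : d = n + 1 - (n + 1) / (m + 1) - (n + 1 + m) / (m + 1)) (hk : k ≤ d) :
    0 ≤ ∑ j ∈ Finset.range (k + 1),
        (-1 : ℤ) ^ (k - j) * ((d - j).choose (k - j) : ℤ) * eulerCoeff ((n : ℤ) - j + 1) m j :=
  stmt5_general n m d k hd hk
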